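/- arXiv:math/0701691 — 3 statements merged into one kernel-verified Lean document; each statement's English description precedes it below -/
import Mathlib

section
/- Let C ≤ F_2^n be a doubly even binary code (4 divides |c| for all c ∈ C). Define σ'(c) = |c|/4 mod 2, χ'(c,d) = |c*d|/2 mod 2, α'(c,d,e) = |c*d*e| mod 2. Then χ' = σ'_2 and α' = σ'_3, i.e., σ'(c+d) = σ'(c) + σ'(d) + χ'(c,d) and χ'(c+d,e) = χ'(c,e) + χ'(d,e) + α'(c,d,e) for all c,d,e ∈ C; in particular |c*d| is even and |c*d*e| is an integer-valued invariant making these well-defined. -/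
/-- Hamming weight of a vector in `F_2^n`. -/
def wt {n : ℕ} (v : Fin n → ZMod 2) : ℕ :=
  (Finset.univ.filter fun i => v i = 1).card

lemma zmod2_cases (x : ZMod 2) : x = 0 ∨ x = 1 := by revert x; decide

lemma wt_add {n : ℕ} (u v : Fin n → ZMod 2) :
    wt (u + v) + 2 * wt (u * v) = wt u + wt v := by
  simp only [wt, Finset.card_filter]
  rw [Finset.mul_sum, ← Finset.sum_add_distrib, ← Finset.sum_add_distrib]
  refine Finset.sum_congr rfl fun i _ => ?_
  rcases zmod2_cases (u i) with h1 | h1 <;> rcases zmod2_cases (v i) with h2 | h2 <;>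
    simp [Pi.add_apply, Pi.mul_apply, h1, h2]

lemma mul_self_eq {n : ℕ} (e : Fin n → ZMod 2) : e * e = e := by
  funext i
  rcases zmod2_cases (e i) with h | h <;> simp [Pi.mul_apply, h]

/-- For a doubly even code `C`, with `σ'(c) = |c|/4`, `χ'(c,d) = |c*d|/2`,
`α'(c,d,e) = |c*d*e|` (mod 2): `|c*d|` is even, `χ' = σ'₂` and `α' = σ'₃`, i.e.
`σ'(c+d) = σ'(c) + σ'(d) + χ'(c,d)` and `χ'(c+d,e) = χ'(c,e) + χ'(d,e) + α'(c,d,e)`. -/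
theorem doubly_even_polarization (n : ℕ)
    (C : Submodule (ZMod 2) (Fin n → ZMod 2))
    (h : ∀ c ∈ C, 4 ∣ wt c) :
    ∀ c ∈ C, ∀ d ∈ C, ∀ e ∈ C,
      2 ∣ wt (c * d) ∧
      ((wt (c + d) / 4 : ℕ) : ZMod 2) =
        ((wt c / 4 : ℕ) : ZMod 2) + ((wt d / 4 : ℕ) : ZMod 2) +
          ((wt (c * d) / 2 : ℕ) : ZMod 2) ∧
      ((wt ((c + d) * e) / 2 : ℕ) : ZMod 2) =
        ((wt (c * e) / 2 : ℕ) : ZMod 2) + ((wt (d * e) / 2 : ℕ) : ZMod 2) +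
          ((wt (c * d * e) : ℕ) : ZMod 2) := by
  -- first a general even lemma
  have key : ∀ c ∈ C, ∀ d ∈ C, 2 ∣ wt (c * d) := by
    intro c hc d hd
    have h1 := h c hc
    have h2 := h d hd
    have h3 := h (c + d) (C.add_mem hc hd)
    have h4 := wt_add c d
    omega
  intro c hc d hd e he
  refine ⟨key c hc d hd, ?_, ?_⟩
  · obtain ⟨a, ha⟩ := h c hc
    obtain ⟨b, hb⟩ := h d hd
    obtain ⟨s, hs⟩ := h (c + d) (C.add_mem hc hd)
    obtain ⟨k, hk⟩ := key c hc d hd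
    have h4 := wt_add c d
    have e1 : wt (c + d) / 4 = s := by omega
    have e2 : wt c / 4 = a := by omega
    have e3 : wt d / 4 = b := by omega
    have e4 : wt (c * d) / 2 = k := by omega
    have e5 : a + b + k = s + 2 * k := by omega
    rw [e1, e2, e3, e4, show ((s : ZMod 2) = ((s + 2 * k : ℕ) : ZMod 2)) by
      push_cast; ring_nf; rw [show ((2 : ZMod 2) = 0) by decide]; ring]
    push_cast [← e5]
    ring
  · have hce := key c hc e he
    have hde := key d hd e he
    have hcde : (c + d) * e = c * e + d * e := by ring
    have h4 := wt_add (c * e) (d * e)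
    have hm : (c * e) * (d * e) = c * d * e := by
      have := mul_self_eq e
      calc (c * e) * (d * e) = c * d * (e * e) := by ring
        _ = c * d * e := by rw [this]
    rw [hm] at h4
    obtain ⟨p, hp⟩ := hce
    obtain ⟨q, hq⟩ := hde
    obtain ⟨r, hr⟩ : 2 ∣ wt (c * e + d * e) := by
      have := key (c + d) (C.add_mem hc hd) e he
      rwa [hcde] at this
    rw [hcde]
    have e1 : wt (c * e + d * e) / 2 = r := by omega
    have e2 : wt (c * e) / 2 = p := by omega
    have e3 : wt (d * e) / 2 = q := by omega
    have e5 : p + q + wt (c * d * e) = r + 2 * wt (c * d * e) := by omega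
    rw [e1, e2, e3, show ((r : ZMod 2) = ((r + 2 * wt (c * d * e) : ℕ) : ZMod 2)) by
      push_cast; ring_nf; rw [show ((2 : ZMod 2) = 0) by decide]; ring]
    push_cast [← e5]
    ring
end

section
/- Let C ≤ F_2^n be a doubly even code. The map α'(c,d,e) = |c*d*e| mod 2 is trilinear over F_2: α'(c+d, e, f) = α'(c,e,f) + α'(d,e,f) for all c,d,e,f ∈ C, and α' is symmetric and satisfies α'(c,c,d) = 0. -/
lemma wt_eq_sum {n : ℕ} (v : Fin n → ZMod 2) :
    wt v = ∑ i, if v i = 1 then 1 else 0 := by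
  rw [wt, Finset.card_filter]

lemma wt_add_mul {n : ℕ} (u v : Fin n → ZMod 2) :
    wt u + wt v = wt (u + v) + 2 * wt (u * v) := by
  simp only [wt_eq_sum, ← Finset.sum_add_distrib, Finset.mul_sum]
  refine Finset.sum_congr rfl fun i _ => ?_
  have : ∀ a b : ZMod 2,
      ((if a = 1 then 1 else 0) + (if b = 1 then 1 else 0) : ℕ) =
        (if a + b = 1 then 1 else 0) + 2 * (if a * b = 1 then 1 else 0) := by decide
  exact this (u i) (v i)

lemma even_wt_mul {n : ℕ} (C : Submodule (ZMod 2) (Fin n → ZMod 2))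
    (h : ∀ c ∈ C, 4 ∣ wt c) {c d : Fin n → ZMod 2}
    (hc : c ∈ C) (hd : d ∈ C) : 2 ∣ wt (c * d) := by
  have key := wt_add_mul c d
  obtain ⟨a, ha⟩ := h c hc
  obtain ⟨b, hb⟩ := h d hd
  obtain ⟨e, he⟩ := h (c + d) (C.add_mem hc hd)
  omega

/-- For a doubly even code `C`, the map `α'(c,d,e) = |c*d*e| mod 2` is trilinear,
symmetric, and satisfies `α'(c,c,d) = 0`. -/
theorem alpha_trilinear_symmetric (n : ℕ)
    (C : Submodule (ZMod 2) (Fin n → ZMod 2))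
    (h : ∀ c ∈ C, 4 ∣ wt c) :
    ∀ c ∈ C, ∀ d ∈ C, ∀ e ∈ C, ∀ f ∈ C,
      ((wt ((c + d) * e * f) : ℕ) : ZMod 2) =
        ((wt (c * e * f) : ℕ) : ZMod 2) + ((wt (d * e * f) : ℕ) : ZMod 2) ∧
      ((wt (c * d * e) : ℕ) : ZMod 2) = ((wt (d * c * e) : ℕ) : ZMod 2) ∧
      ((wt (c * d * e) : ℕ) : ZMod 2) = ((wt (c * e * d) : ℕ) : ZMod 2) ∧
      ((wt (c * c * d) : ℕ) : ZMod 2) = 0 := by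
  intro c hc d hd e he f hf
  refine ⟨?_, ?_, ?_, ?_⟩
  · have key := wt_add_mul (c * e * f) (d * e * f)
    have heq : c * e * f + d * e * f = (c + d) * e * f := by ring
    rw [heq] at key
    have : ((wt (c * e * f) + wt (d * e * f) : ℕ) : ZMod 2)
        = ((wt ((c + d) * e * f) + 2 * wt (c * e * f * (d * e * f)) : ℕ) : ZMod 2) := by
      rw [key]
    push_cast at this
    simp only [show ((2 : ZMod 2) = 0) by decide, zero_mul, add_zero] at this
    rw [this]
  · rw [mul_comm c d]
  · rw [mul_assoc, mul_comm d e, ← mul_assoc]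
  · have hcc : c * c = c := by
      funext i
      have : ∀ a : ZMod 2, a * a = a := by decide
      exact this (c i)
    rw [hcc]
    obtain ⟨k, hk⟩ := even_wt_mul C h hc hd
    rw [hk]
    push_cast
    simp [show ((2 : ZMod 2) = 0) by decide]
end

section
/- Let V be an m-dimensional F_2-vector space and P : V → F_2 with P(0) = 0 and combinatorial degree 3. Then there exists a doubly even binary linear code C and an isomorphism φ : V → C of F_2-vector spaces such that P(v) ≡ |φ(v)|/4 (mod 2) for all v ∈ V. -/
/-- The `s`-th derived form of `P`. -/
def derForm {V : Type*} [AddCommMonoid V] (P : V → ZMod 2) (s : ℕ)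
    (v : Fin s → V) : ZMod 2 :=
  ∑ J : Finset (Fin s), P (∑ j ∈ J, v j)

open Finset

theorem Finset.powerset_map {α β : Type*} [DecidableEq β] (f : α ↪ β) (s : Finset α) :
    (s.map f).powerset = s.powerset.map (mapEmbedding f).toEmbedding := by
  ext t
  simp [subset_map_iff, eq_comm]

theorem Finset.sum_powerset_map {α β M : Type*} [DecidableEq β] [AddCommMonoid M] (f : α ↪ β)
    (s : Finset α) (g : Finset β → M) :
    ∑ K ∈ (s.map f).powerset, g K = ∑ J ∈ s.powerset, g (J.map f) := by
  rw [powerset_map, sum_map]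
  rfl

theorem Finset.sum_powerset_sum_powerset_zmodTwo {ι M : Type*} [DecidableEq ι] [AddCommMonoid M]
    [Module (ZMod 2) M] (f : Finset ι → M) (S : Finset ι) :
    ∑ T ∈ S.powerset, ∑ K ∈ T.powerset, f K = f S := by
  have hswap : ∑ T ∈ S.powerset, ∑ K ∈ T.powerset, f K = ∑ K ∈ S.powerset, ∑ _T ∈ Icc K S, f K :=
    sum_comm' fun T K => by simp only [mem_powerset, mem_Icc]; tauto
  rw [hswap, sum_eq_single_of_mem S (mem_powerset_self S)]
  · simp
  · intro K hK hKS
    have hlt : #K < #S := card_lt_card (ssubset_of_subset_of_ne (mem_powerset.mp hK) hKS)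
    obtain ⟨d, hd⟩ : ∃ d, #S - #K = d + 1 := ⟨#S - #K - 1, by omega⟩
    rw [sum_const, card_Icc_finset (mem_powerset.mp hK), hd, pow_succ, mul_nsmul,
      ← Nat.cast_smul_eq_nsmul (ZMod 2) 2, show ((2 : ℕ) : ZMod 2) = 0 from rfl, zero_smul]

theorem Module.Basis.sum_support_repr {ι V : Type*} [AddCommGroup V] [Module (ZMod 2) V]
    (b : Module.Basis ι (ZMod 2) V) (v : V) : ∑ i ∈ (b.repr v).support, b i = v := by
  conv_rhs => rw [← b.linearCombination_repr v, Finsupp.linearCombination_apply, Finsupp.sum]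
  refine sum_congr rfl fun i hi => ?_
  have hi : b.repr v i = 1 := Fin.eq_one_of_ne_zero _ (Finsupp.mem_support_iff.mp hi)
  rw [hi, one_smul]

theorem Finset.exists_fin_embedding_map_univ {α : Type*} (s : Finset α) :
    ∃ (k : ℕ) (e : Fin k ↪ α), univ.map e = s :=
  ⟨#s, s.equivFin.symm.toEmbedding.trans (Function.Embedding.subtype _), by
    rw [← map_map, map_univ_equiv, univ_eq_attach, attach_map_val]⟩

section AlgebraicNormalForm

variable {ι V : Type*} [DecidableEq ι] [AddCommGroup V] [Module (ZMod 2) V]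
  (b : Module.Basis ι (ZMod 2) V) (P : V → ZMod 2)

noncomputable def anfCoeff (T : Finset ι) : ZMod 2 :=
  ∑ K ∈ T.powerset, P (∑ i ∈ K, b i)

theorem anfCoeff_map_univ {k : ℕ} (e : Fin k ↪ ι) :
    anfCoeff b P (univ.map e) = derForm P k (b ∘ e) := by
  simp [anfCoeff, sum_powerset_map, derForm, sum_map]

theorem apply_eq_sum_anfCoeff_mul_prod [Fintype ι] (v : V) :
    P v = ∑ T, anfCoeff b P T * ∏ i ∈ T, b.repr v i := by
  have hprod (T : Finset ι) :
      ∏ i ∈ T, b.repr v i = if T ⊆ (b.repr v).support then 1 else 0 := by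
    split_ifs with hT
    · exact prod_eq_one fun i hi => (Fin.eq_one_of_ne_zero _ (Finsupp.mem_support_iff.mp (hT hi)) :)
    · obtain ⟨i, hi, hni⟩ := not_subset.mp hT
      exact prod_eq_zero hi (Finsupp.notMem_support_iff.mp hni)
  simp only [hprod, mul_ite, mul_one, mul_zero, sum_ite, sum_const_zero, add_zero,
    filter_subset_univ]
  conv_lhs => rw [← b.sum_support_repr v]
  exact (sum_powerset_sum_powerset_zmodTwo (fun K => P (∑ i ∈ K, b i)) _).symm

end AlgebraicNormalForm

theorem wt_eq_sum_val {n : ℕ} (c : Fin n → ZMod 2) : wt c = ∑ i, (c i).val := by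
  rw [wt, card_filter]
  refine sum_congr rfl fun i _ => ?_
  generalize c i = z
  fin_cases z <;> rfl

section ColumnCode

variable {κ V : Type*} [Fintype κ] [AddCommGroup V] [Module (ZMod 2) V]

noncomputable def columnCode (ℓ : κ → Module.Dual (ZMod 2) V) :
    V →ₗ[ZMod 2] Fin (Fintype.card κ) → ZMod 2 :=
  LinearMap.funLeft (ZMod 2) (ZMod 2) (Fintype.equivFin κ).symm ∘ₗ LinearMap.pi ℓ

theorem wt_columnCode (ℓ : κ → Module.Dual (ZMod 2) V) (v : V) :
    wt (columnCode ℓ v) = ∑ k, (ℓ k v).val := by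
  rw [wt_eq_sum_val]
  exact (Fintype.equivFin κ).symm.sum_comp fun k => (ℓ k v).val

theorem columnCode_injective {ℓ : κ → Module.Dual (ZMod 2) V}
    (hℓ : ∀ v, (∀ k, ℓ k v = 0) → v = 0) : Function.Injective (columnCode ℓ) := by
  rw [← LinearMap.ker_eq_bot, LinearMap.ker_eq_bot']
  intro v hv
  refine hℓ v fun k => ?_
  simpa [columnCode] using congrFun hv (Fintype.equivFin κ k)

end ColumnCode

/-- Modulo `8` these multiplicities are `2 ^ (3 - k) * (-1) ^ (j - 1)`: for `x ∈ {0,1}^k` one has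
`2 ^ (k - 1) * x₁ ⋯ xₖ = ∑_{∅ ≠ A ⊆ [k]} (-1) ^ (|A| - 1) [∑_{j ∈ A} xⱼ odd]` over `ℤ`. -/
def blockMult (k j : ℕ) : ℕ :=
  if j = 0 then 0 else 2 ^ (3 - k) * if Odd j then 1 else 7

theorem sum_blockMult_mul_val_fin {k : ℕ} (hk₁ : 1 ≤ k) (hk₃ : k ≤ 3) (y : Fin k → ZMod 2) :
    ∑ A : Finset (Fin k), (blockMult k #A * (∑ j ∈ A, y j).val : ZMod 8) =
      4 * ∏ i, ((y i).val : ZMod 8) := by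
  revert y
  interval_cases k <;> decide

theorem sum_blockMult_mul_val {ι : Type*} [DecidableEq ι] {T : Finset ι} (hT₁ : 1 ≤ #T)
    (hT₃ : #T ≤ 3) (x : ι → ZMod 2) :
    ∑ A ∈ T.powerset, (blockMult #T #A * (∑ j ∈ A, x j).val : ZMod 8) =
      4 * ∏ i ∈ T, ((x i).val : ZMod 8) := by
  obtain ⟨k, e, rfl⟩ := T.exists_fin_embedding_map_univ
  rw [card_map, card_univ, Fintype.card_fin] at hT₁ hT₃ ⊢
  simpa [sum_powerset_map, sum_map, prod_map] using sum_blockMult_mul_val_fin hT₁ hT₃ (x ∘ e)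

section AnfCode

variable {ι V : Type*} [Fintype ι] [DecidableEq ι] [AddCommGroup V] [Module (ZMod 2) V]
  (b : Module.Basis ι (ZMod 2) V)

/-- The eight copies of every column make the code injective without changing weights mod `8`. -/
def anfColumnMult (c : Finset ι → ZMod 2) (A : Finset ι) : ℕ :=
  8 + ∑ T, (c T).val * if A ⊆ T then blockMult #T #A else 0

noncomputable def anfCode (c : Finset ι → ZMod 2) :
    V →ₗ[ZMod 2] Fin (Fintype.card (Σ A, Fin (anfColumnMult c A))) → ZMod 2 :=
  columnCode fun k : Σ A, Fin (anfColumnMult c A) => ∑ j ∈ k.1, b.coord j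

theorem anfCode_injective (c : Finset ι → ZMod 2) : Function.Injective (anfCode b c) := by
  refine columnCode_injective fun v hv => b.repr.map_eq_zero_iff.mp <| Finsupp.ext fun i => ?_
  simpa using hv ⟨{i}, ⟨0, by simp [anfColumnMult]⟩⟩

theorem wt_anfCode (c : Finset ι → ZMod 2) (v : V) :
    wt (anfCode b c v) = ∑ A, anfColumnMult c A * (∑ j ∈ A, b.repr v j).val := by
  simp [anfCode, wt_columnCode, Fintype.sum_sigma]

theorem natCast_wt_anfCode {c : Finset ι → ZMod 2} (hc : ∀ T, c T ≠ 0 → 1 ≤ #T ∧ #T ≤ 3)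
    (v : V) :
    (wt (anfCode b c v) : ZMod 8) =
      4 * ((∑ T, (c T).val * ∏ i ∈ T, (b.repr v i).val : ℕ) : ZMod 8) := by
  have hblock (T : Finset ι) :
      ((c T).val : ZMod 8) *
          ∑ A ∈ T.powerset, (blockMult #T #A * (∑ j ∈ A, b.repr v j).val : ZMod 8) =
        (c T).val * (4 * ∏ i ∈ T, ((b.repr v i).val : ZMod 8)) := by
    by_cases hT : c T = 0
    · simp [hT]
    · obtain ⟨hT₁, hT₃⟩ := hc T hT
      rw [sum_blockMult_mul_val hT₁ hT₃]
  rw [wt_anfCode]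
  simp only [anfColumnMult]
  push_cast
  rw [show (8 : ZMod 8) = 0 from rfl]
  simp only [zero_add, sum_mul, mul_assoc]
  rw [sum_comm]
  simp only [← mul_sum, ite_mul, zero_mul, ← sum_filter, filter_subset_univ, hblock]
  rw [mul_sum]
  exact sum_congr rfl fun T _ => mul_left_comm _ _ _

end AnfCode

theorem four_dvd_and_natCast_div_four_of_natCast_eq {w p : ℕ} (h : (w : ZMod 8) = 4 * p) :
    4 ∣ w ∧ ((w / 4 : ℕ) : ZMod 2) = p := by
  have h8 : w % 8 = 4 * p % 8 := by
    rw [← ZMod.natCast_eq_natCast_iff']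
    push_cast
    exact h
  refine ⟨by omega, ?_⟩
  rw [ZMod.natCast_eq_natCast_iff']
  omega

theorem chein_goodaire_general {V : Type*} [AddCommGroup V] [Module (ZMod 2) V]
    [FiniteDimensional (ZMod 2) V] (P : V → ZMod 2) (hP : P 0 = 0)
    (hvanish : ∀ s, 3 < s → ∀ v : Fin s → V, derForm P s v = 0) :
    ∃ (n : ℕ) (C : Submodule (ZMod 2) (Fin n → ZMod 2)) (φ : V ≃ₗ[ZMod 2] C),
      (∀ c ∈ C, 4 ∣ wt c) ∧
      ∀ v : V, 4 ∣ wt (φ v : Fin n → ZMod 2) ∧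
        P v = ((wt (φ v : Fin n → ZMod 2) / 4 : ℕ) : ZMod 2) := by
  classical
  let b := Module.finBasis (ZMod 2) V
  have hc (T : Finset _) (hT : anfCoeff b P T ≠ 0) : 1 ≤ #T ∧ #T ≤ 3 := by
    obtain ⟨k, e, rfl⟩ := T.exists_fin_embedding_map_univ
    rw [anfCoeff_map_univ] at hT
    rw [card_map, card_univ, Fintype.card_fin]
    refine ⟨Nat.one_le_iff_ne_zero.mpr ?_, not_lt.mp fun hk => hT (hvanish k hk _)⟩
    rintro rfl
    simp [derForm, Finset.eq_empty_of_isEmpty, hP] at hT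
  have hweight v := four_dvd_and_natCast_div_four_of_natCast_eq (natCast_wt_anfCode b hc v)
  refine ⟨_, LinearMap.range (anfCode b (anfCoeff b P)),
    LinearEquiv.ofInjective _ (anfCode_injective b _), ?_, fun v => ⟨(hweight v).1, ?_⟩⟩
  · rintro _ ⟨v, rfl⟩
    exact (hweight v).1
  · rw [LinearEquiv.ofInjective_apply, (hweight v).2, apply_eq_sum_anfCoeff_mul_prod b P v]
    push_cast
    simp

/-- Chein–Goodaire: if `P : V → F_2` with `P(0) = 0` has combinatorial degree `3`,
then there is a doubly even code `C` and an isomorphism `φ : V ≃ C` with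
`P(v) ≡ |φ(v)|/4 (mod 2)` for all `v`. -/
theorem chein_goodaire {V : Type*} [AddCommGroup V] [Module (ZMod 2) V]
    [FiniteDimensional (ZMod 2) V] (P : V → ZMod 2) (hP : P 0 = 0)
    (hvanish : ∀ s, 3 < s → ∀ v : Fin s → V, derForm P s v = 0)
    (hne : ∃ v : Fin 3 → V, derForm P 3 v ≠ 0) :
    ∃ (n : ℕ) (C : Submodule (ZMod 2) (Fin n → ZMod 2)) (φ : V ≃ₗ[ZMod 2] C),
      (∀ c ∈ C, 4 ∣ wt c) ∧
      ∀ v : V, 4 ∣ wt (φ v : Fin n → ZMod 2) ∧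
        P v = ((wt (φ v : Fin n → ZMod 2) / 4 : ℕ) : ZMod 2) :=
  chein_goodaire_general P hP hvanish
end
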